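/- arXiv:2207.06320 — 2 statements merged into one kernel-verified Lean document; each statement's English description precedes it below -/
import Mathlib

section
/- Assume F^ε admits a density f^ε ∈ C² with f^ε ≤ M and |(f^ε)'| ≤ M for some M > 0, E‖X‖²_2 < ∞, and that the matrix U = ∫ (∫ x f^ε(y − β_0^T x) dF^X(x)) (∫ x^T f^ε(y − β_0^T x) dF^X(x)) dF^Y(y) is positive definite. Then there exist a neighborhood of β_0 and a constant C > 0 such that D_{2,F^Y}(β) ≥ C ‖β − β_0‖²_2 for all β in that neighborhood. -/
open MeasureTheory ProbabilityTheory Filter Matrix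
open scoped ENNReal NNReal Topology

noncomputable section

/-- The Euclidean norm of a vector in `Fin d → ℝ`. -/
def vnorm {d : ℕ} (v : Fin d → ℝ) : ℝ := Real.sqrt (∑ i, v i ^ 2)

/-- The norm `‖x‖_{2,Γ} = √(xᵀ Γ x)` associated with a matrix `Γ`. -/
def mnorm {d : ℕ} (Γ : Matrix (Fin d) (Fin d) ℝ) (x : Fin d → ℝ) : ℝ :=
  Real.sqrt (x ⬝ᵥ Γ *ᵥ x)

/-- The cumulative distribution function of a measure on `ℝ`. -/
def cdfOf (μ : Measure ℝ) (y : ℝ) : ℝ := (μ (Set.Iic y)).toReal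

/-- The empirical CDF of the sample `Y 0 ω, …, Y (n-1) ω`. -/
def empCDF {Ω : Type*} (n : ℕ) (Y : ℕ → Ω → ℝ) (ω : Ω) (y : ℝ) : ℝ :=
  (n : ℝ)⁻¹ * ∑ i ∈ Finset.range n, if Y i ω ≤ y then (1 : ℝ) else 0

/-- The empirical deconvolution criterion `D_{n,p}(β)`. -/
def Dnp {Ω : Type*} {d : ℕ} (Feps : ℝ → ℝ) (p n : ℕ) (Y : ℕ → Ω → ℝ)
    (X : ℕ → Ω → Fin d → ℝ) (ω : Ω) (β : Fin d → ℝ) : ℝ :=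
  (n : ℝ)⁻¹ * ∑ j ∈ Finset.range n,
    |empCDF n Y ω (Y j ω) - (n : ℝ)⁻¹ * ∑ i ∈ Finset.range n, Feps (Y j ω - β ⬝ᵥ X i ω)| ^ p

/-- The population criterion `D_{2,F^Y}(β)`. -/
def Dpop {d : ℕ} (Feps : ℝ → ℝ) (μX : Measure (Fin d → ℝ)) (μY : Measure ℝ)
    (β : Fin d → ℝ) : ℝ :=
  ∫ y, (cdfOf μY y - ∫ x, Feps (y - β ⬝ᵥ x) ∂μX) ^ 2 ∂μY

/-- `Z 0, Z 1, …` is an i.i.d. sample from the distribution `μ`. -/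
def IsIIDSample {Ω : Type*} [MeasureSpace Ω] {E : Type*} [MeasurableSpace E]
    (Z : ℕ → Ω → E) (μ : Measure E) : Prop :=
  (∀ i, Measurable (Z i)) ∧ (∀ i, Measure.map (Z i) ℙ = μ) ∧
    iIndepFun Z ℙ

/-- The unlinked linear regression model: `Y =d β₀ᵀ X + ε`. -/
def UnlinkedModel {d : ℕ} (μX : Measure (Fin d → ℝ)) (μeps : Measure ℝ)
    (β₀ : Fin d → ℝ) (μY : Measure ℝ) : Prop :=
  μY = Measure.map (fun q : (Fin d → ℝ) × ℝ => β₀ ⬝ᵥ q.1 + q.2) (μX.prod μeps)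

/-- The set `B₀` of vectors `β` such that `βᵀX` has the same distribution as `β₀ᵀX`. -/
def B0set {d : ℕ} (μX : Measure (Fin d → ℝ)) (β₀ : Fin d → ℝ) : Set (Fin d → ℝ) :=
  {β | Measure.map (fun x => β ⬝ᵥ x) μX = Measure.map (fun x => β₀ ⬝ᵥ x) μX}

/-!
Under the model, `F^Y(y) = ∫ F^ε(y - β₀ᵀx) dF^X(x)`, so the integrand of `D_{2,F^Y}(β)` is the
square of `∫ (F^ε(y - β₀ᵀx) - F^ε(y - βᵀx)) dF^X(x)`. Because `f^ε` is Lipschitz, a first-order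
expansion of `F^ε` writes this as `hᵀv(y)`, with `h = β - β₀` and
`v(y) = ∫ x f^ε(y - β₀ᵀx) dF^X(x)`, up to an error `O(‖h‖² E‖X‖²)`, while `hᵀv(y) = O(‖h‖ E‖X‖)`.
Squaring and integrating against `F^Y` gives `D_{2,F^Y}(β) ≥ hᵀUh - K‖h‖³ ≥ c‖h‖² - K‖h‖³`,
where `c > 0` is the minimum of `uᵀUu` on the unit sphere, and this exceeds `c‖h‖²/2` for small `h`.
-/

open scoped Interval

lemma vnorm_eq_norm_toLp {d : ℕ} (v : Fin d → ℝ) : vnorm v = ‖WithLp.toLp 2 v‖ := by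
  simp [vnorm, EuclideanSpace.norm_eq]

lemma abs_apply_le_vnorm {d : ℕ} (v : Fin d → ℝ) (i : Fin d) : |v i| ≤ vnorm v := by
  simpa [vnorm_eq_norm_toLp] using PiLp.norm_apply_le (WithLp.toLp 2 v) i

lemma vnorm_sq {d : ℕ} (v : Fin d → ℝ) : vnorm v ^ 2 = ∑ i, v i ^ 2 :=
  Real.sq_sqrt (Finset.sum_nonneg fun _ _ => sq_nonneg _)

lemma vnorm_nonneg {d : ℕ} (v : Fin d → ℝ) : 0 ≤ vnorm v := Real.sqrt_nonneg _

lemma vnorm_smul {d : ℕ} (a : ℝ) (v : Fin d → ℝ) : vnorm (a • v) = |a| * vnorm v := by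
  simp only [vnorm_eq_norm_toLp, WithLp.toLp_smul, norm_smul, Real.norm_eq_abs]

lemma continuous_vnorm {d : ℕ} : Continuous (vnorm (d := d)) := by
  simp only [funext vnorm_eq_norm_toLp]
  exact continuous_norm.comp (PiLp.continuous_toLp 2 _)

lemma abs_dotProduct_le_vnorm_mul_vnorm {d : ℕ} (v w : Fin d → ℝ) :
    |v ⬝ᵥ w| ≤ vnorm v * vnorm w := by
  simpa [vnorm_eq_norm_toLp, EuclideanSpace.inner_eq_star_dotProduct, dotProduct_comm]
    using abs_real_inner_le_norm (WithLp.toLp 2 v) (WithLp.toLp 2 w)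

lemma integrable_vnorm {d : ℕ} {μ : Measure (Fin d → ℝ)} [IsFiniteMeasure μ]
    (h2 : Integrable (fun x => vnorm x ^ 2) μ) : Integrable vnorm μ :=
  ((memLp_two_iff_integrable_sq continuous_vnorm.aestronglyMeasurable).mpr h2).integrable
    one_le_two

lemma Matrix.PosDef.exists_pos_mul_vnorm_sq_le {d : ℕ} {U : Matrix (Fin d) (Fin d) ℝ}
    (hU : U.PosDef) : ∃ c, 0 < c ∧ ∀ v, c * vnorm v ^ 2 ≤ v ⬝ᵥ U *ᵥ v := by
  have hq : Continuous fun v : Fin d → ℝ => v ⬝ᵥ U *ᵥ v := by fun_prop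
  have hK : IsCompact {v : Fin d → ℝ | vnorm v = 1} := by
    convert (PiLp.homeomorph 2 (fun _ : Fin d => ℝ)).symm.isCompact_preimage.mpr
      (isCompact_sphere 0 1) using 1
    ext v; simp [PiLp.homeomorph, vnorm_eq_norm_toLp]
  obtain ⟨c, hc, hcK⟩ := hK.exists_forall_le' hq.continuousOn fun v (hv : vnorm v = 1) =>
    hU.dotProduct_mulVec_pos fun h0 => by simp [h0, vnorm] at hv
  refine ⟨c, hc, fun v => ?_⟩
  rcases eq_or_ne (vnorm v) 0 with h0 | h0
  · simpa [h0] using hU.posSemidef.dotProduct_mulVec_nonneg v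
  have hu : vnorm ((vnorm v)⁻¹ • v) = 1 := by
    rw [vnorm_smul, abs_inv, abs_of_nonneg (vnorm_nonneg v), inv_mul_cancel₀ h0]
  calc c * vnorm v ^ 2 ≤ vnorm v ^ 2 * ((vnorm v)⁻¹ • v ⬝ᵥ U *ᵥ ((vnorm v)⁻¹ • v)) := by
        rw [mul_comm]; exact mul_le_mul_of_nonneg_left (hcK _ hu) (sq_nonneg _)
    _ = v ⬝ᵥ U *ᵥ v := by
        rw [mulVec_smul, smul_dotProduct, dotProduct_smul, smul_eq_mul, smul_eq_mul]
        field_simp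

lemma sq_sub_two_mul_mul_le_sq {a b g r : ℝ} (ha : |a| ≤ g) (hba : |b - a| ≤ r) :
    a ^ 2 - 2 * g * r ≤ b ^ 2 := by
  have hprod : |a| * |b - a| ≤ g * r :=
    mul_le_mul ha hba (abs_nonneg _) ((abs_nonneg a).trans ha)
  nlinarith [neg_abs_le (a * (b - a)), abs_mul a (b - a), sq_nonneg (b - a)]

lemma exists_mul_sq_le_of_sub_mul_pow_three_le {α : Type*} {r D : α → ℝ} {c K : ℝ}
    (hc : 0 < c) (hK : 0 ≤ K) (hr : ∀ a, 0 ≤ r a) (hD : ∀ a, c * r a ^ 2 - K * r a ^ 3 ≤ D a) :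
    ∃ C, 0 < C ∧ ∃ δ, 0 < δ ∧ ∀ a, r a < δ → C * r a ^ 2 ≤ D a := by
  refine ⟨c / 2, half_pos hc, c / (2 * (K + 1)), by positivity, fun a ha => ?_⟩
  have hKr : K * r a ≤ c / 2 :=
    calc K * r a ≤ (K + 1) * r a := by nlinarith [hr a]
      _ ≤ (K + 1) * (c / (2 * (K + 1))) := by gcongr
      _ = c / 2 := by field_simp
  nlinarith [mul_le_mul_of_nonneg_right hKr (sq_nonneg (r a)), hD a]

section Moments

variable {ι α : Type*} [Fintype ι] [MeasurableSpace α] {μ : Measure α}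

lemma integral_dotProduct_mul (h : ι → ℝ) {X : α → ι → ℝ} {g : α → ℝ}
    (hg : ∀ i, Integrable (fun x => X x i * g x) μ) :
    ∫ x, (h ⬝ᵥ X x) * g x ∂μ = ∑ i, h i * ∫ x, X x i * g x ∂μ := by
  simp only [dotProduct, Finset.sum_mul, mul_assoc]
  rw [integral_finsetSum _ fun i _ => (hg i).const_mul (h i)]
  simp only [integral_const_mul]

lemma integral_sq_sum_mul_eq_dotProduct_mulVec (h : ι → ℝ) {v : ι → α → ℝ}
    (hv : ∀ i, MemLp (v i) 2 μ) :
    ∫ y, (∑ i, h i * v i y) ^ 2 ∂μ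
      = h ⬝ᵥ (Matrix.of fun i j => ∫ y, v i y * v j y ∂μ) *ᵥ h := by
  have hexp : ∀ y, (∑ i, h i * v i y) ^ 2 = ∑ i, ∑ j, h i * h j * (v i y * v j y) :=
    fun y => by
      simp only [sq, Finset.sum_mul_sum]
      exact Finset.sum_congr rfl fun i _ => Finset.sum_congr rfl fun j _ => by ring
  have hvv : ∀ i j, Integrable (fun y => h i * h j * (v i y * v j y)) μ := fun i j =>
    ((hv i).integrable_mul (hv j)).const_mul _
  simp only [hexp, dotProduct, mulVec, Finset.mul_sum, Matrix.of_apply]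
  rw [integral_finsetSum _ fun i _ => integrable_finsetSum _ fun j _ => hvv i j]
  refine Finset.sum_congr rfl fun i _ => ?_
  rw [integral_finsetSum _ fun j _ => hvv i j]
  refine Finset.sum_congr rfl fun j _ => ?_
  rw [integral_const_mul]
  ring

end Moments

section Density

variable {μ : Measure ℝ} {f : ℝ → ℝ}

lemma integrable_of_eq_withDensity [IsFiniteMeasure μ] (hf : ∀ t, 0 ≤ f t) (hfm : Measurable f)
    (hμ : μ = volume.withDensity fun t => ENNReal.ofReal (f t)) : Integrable f := by
  refine ⟨hfm.aestronglyMeasurable, ?_⟩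
  rw [hasFiniteIntegral_iff_ofReal (Eventually.of_forall hf), ← setLIntegral_univ,
    ← withDensity_apply _ MeasurableSet.univ, ← hμ]
  exact measure_lt_top μ _

lemma cdfOf_eq_setIntegral_Iic (hf : ∀ t, 0 ≤ f t) (hfm : Measurable f)
    (hμ : μ = volume.withDensity fun t => ENNReal.ofReal (f t)) (y : ℝ) :
    cdfOf μ y = ∫ t in Set.Iic y, f t := by
  rw [cdfOf, hμ, withDensity_apply _ measurableSet_Iic,
    integral_eq_lintegral_of_nonneg_ae (Eventually.of_forall hf) hfm.aestronglyMeasurable]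

lemma cdfOf_sub_cdfOf_eq_intervalIntegral [IsFiniteMeasure μ] (hf : ∀ t, 0 ≤ f t)
    (hfm : Measurable f) (hμ : μ = volume.withDensity fun t => ENNReal.ofReal (f t)) (a b : ℝ) :
    cdfOf μ b - cdfOf μ a = ∫ t in a..b, f t := by
  have hfi := integrable_of_eq_withDensity hf hfm hμ
  rw [cdfOf_eq_setIntegral_Iic hf hfm hμ, cdfOf_eq_setIntegral_Iic hf hfm hμ,
    intervalIntegral.integral_Iic_sub_Iic hfi.integrableOn hfi.integrableOn]

lemma abs_cdfOf_sub_sub_mul_le [IsFiniteMeasure μ] (hf : ∀ t, 0 ≤ f t)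
    (hμ : μ = volume.withDensity fun t => ENNReal.ofReal (f t)) {L : ℝ≥0}
    (hfL : LipschitzWith L f) (a b : ℝ) :
    |cdfOf μ b - cdfOf μ a - f a * (b - a)| ≤ L * (b - a) ^ 2 := by
  have hfi := integrable_of_eq_withDensity hf hfL.continuous.measurable hμ
  have hdev : ∀ t ∈ Ι a b, ‖f t - f a‖ ≤ L * |b - a| := fun t ht => by
    rw [← dist_eq_norm, ← Real.dist_eq]
    exact (hfL.dist_le_mul t a).trans (mul_le_mul_of_nonneg_left
      (Set.abs_sub_left_of_mem_uIcc (Set.uIoc_subset_uIcc ht)) L.coe_nonneg)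
  have hconst : f a * (b - a) = ∫ _ in a..b, f a := by simp [mul_comm]
  rw [cdfOf_sub_cdfOf_eq_intervalIntegral hf hfL.continuous.measurable hμ, hconst,
    ← intervalIntegral.integral_sub hfi.intervalIntegrable intervalIntegrable_const]
  calc |∫ t in a..b, (f t - f a)| ≤ L * |b - a| * |b - a| :=
        intervalIntegral.norm_integral_le_of_norm_le_const hdev
    _ = L * (b - a) ^ 2 := by rw [mul_assoc, ← abs_mul, ← sq, abs_sq]

end Density

lemma cdfOf_nonneg (μ : Measure ℝ) (y : ℝ) : 0 ≤ cdfOf μ y := ENNReal.toReal_nonneg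

lemma cdfOf_le_one (μ : Measure ℝ) [IsProbabilityMeasure μ] (y : ℝ) : cdfOf μ y ≤ 1 :=
  ENNReal.toReal_le_of_le_ofReal zero_le_one (by simpa using prob_le_one)

lemma monotone_cdfOf (μ : Measure ℝ) [IsFiniteMeasure μ] : Monotone (cdfOf μ) := fun _ _ hab =>
  ENNReal.toReal_mono (measure_ne_top _ _) (measure_mono (Set.Iic_subset_Iic.mpr hab))

section Model

variable {d : ℕ} {μX : Measure (Fin d → ℝ)} {μeps μY : Measure ℝ} {β₀ : Fin d → ℝ}

lemma UnlinkedModel.isProbabilityMeasure [IsProbabilityMeasure μX] [IsProbabilityMeasure μeps]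
    (hmodel : UnlinkedModel μX μeps β₀ μY) : IsProbabilityMeasure μY := by
  rw [hmodel]
  exact Measure.isProbabilityMeasure_map (by fun_prop)

lemma UnlinkedModel.cdfOf_eq_integral [SFinite μX] [IsFiniteMeasure μeps]
    (hmodel : UnlinkedModel μX μeps β₀ μY) (y : ℝ) :
    cdfOf μY y = ∫ x, cdfOf μeps (y - β₀ ⬝ᵥ x) ∂μX := by
  have hm : Measurable fun q : (Fin d → ℝ) × ℝ => β₀ ⬝ᵥ q.1 + q.2 := by fun_prop
  have hsection : ∀ x, μeps (Prod.mk x ⁻¹' ((fun q => β₀ ⬝ᵥ q.1 + q.2) ⁻¹' Set.Iic y))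
      = μeps (Set.Iic (y - β₀ ⬝ᵥ x)) := fun x => by
    congr 1; ext t; simp [le_sub_iff_add_le']
  rw [cdfOf, hmodel, Measure.map_apply hm measurableSet_Iic,
    Measure.prod_apply (hm measurableSet_Iic), lintegral_congr fun x => hsection x,
    ← integral_toReal _ (Eventually.of_forall fun _ => measure_lt_top _ _)]
  · rfl
  · have hmono : Monotone fun t => μeps (Set.Iic t) := fun _ _ hab =>
      measure_mono (Set.Iic_subset_Iic.mpr hab)
    exact (hmono.measurable.comp (by fun_prop)).aemeasurable

end Model

section Linearization

variable {d : ℕ} {μX : Measure (Fin d → ℝ)} {μeps : Measure ℝ}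

lemma integrable_apply_of_integrable_vnorm (hX : Integrable vnorm μX) (i : Fin d) :
    Integrable (fun x => x i) μX :=
  hX.mono' (continuous_apply i).aestronglyMeasurable
    (Eventually.of_forall fun x => abs_apply_le_vnorm x i)

lemma integrable_dotProduct_of_integrable_vnorm (hX : Integrable vnorm μX) (h : Fin d → ℝ) :
    Integrable (fun x => h ⬝ᵥ x) μX :=
  (hX.const_mul (vnorm h)).mono' (by fun_prop)
    (Eventually.of_forall fun x => abs_dotProduct_le_vnorm_mul_vnorm h x)

lemma integrable_cdfOf_sub_dotProduct [IsFiniteMeasure μX] [IsProbabilityMeasure μeps]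
    (β : Fin d → ℝ) (y : ℝ) : Integrable (fun x => cdfOf μeps (y - β ⬝ᵥ x)) μX :=
  .of_bound ((monotone_cdfOf μeps).measurable.comp (by fun_prop)).aestronglyMeasurable 1
    (Eventually.of_forall fun x => by
      rw [Real.norm_eq_abs, abs_of_nonneg (cdfOf_nonneg _ _)]; exact cdfOf_le_one _ _)

lemma integral_cdfOf_sub_dotProduct_mem_Icc [IsProbabilityMeasure μX]
    [IsProbabilityMeasure μeps] (β : Fin d → ℝ) (y : ℝ) :
    ∫ x, cdfOf μeps (y - β ⬝ᵥ x) ∂μX ∈ Set.Icc 0 1 :=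
  ⟨integral_nonneg fun _ => cdfOf_nonneg _ _,
    (integral_mono (integrable_cdfOf_sub_dotProduct β y) (integrable_const 1)
      fun _ => cdfOf_le_one _ _).trans_eq (by simp)⟩

lemma measurable_integral_cdfOf_sub_dotProduct [SFinite μX] [IsFiniteMeasure μeps]
    (β : Fin d → ℝ) : Measurable fun y => ∫ x, cdfOf μeps (y - β ⬝ᵥ x) ∂μX :=
  (((monotone_cdfOf μeps).measurable.comp (f := fun p : ℝ × (Fin d → ℝ) => p.1 - β ⬝ᵥ p.2)
    (by fun_prop)).stronglyMeasurable.integral_prod_right').measurable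

variable {f : ℝ → ℝ} {M : ℝ}

lemma integrable_mul_comp_sub_dotProduct (hfM : ∀ t, |f t| ≤ M) (hfc : Continuous f)
    {φ : (Fin d → ℝ) → ℝ} (hφ : Integrable φ μX) (β₀ : Fin d → ℝ) (y : ℝ) :
    Integrable (fun x => φ x * f (y - β₀ ⬝ᵥ x)) μX :=
  hφ.mul_bdd (c := M) (hfc.comp (by fun_prop)).aestronglyMeasurable
    (Eventually.of_forall fun _ => hfM _)

lemma abs_integral_mul_comp_sub_dotProduct_le (hfM : ∀ t, |f t| ≤ M)
    {φ : (Fin d → ℝ) → ℝ} (hφ : Integrable φ μX) (β₀ : Fin d → ℝ) (y : ℝ) :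
    |∫ x, φ x * f (y - β₀ ⬝ᵥ x) ∂μX| ≤ M * ∫ x, |φ x| ∂μX := by
  rw [← Real.norm_eq_abs, ← integral_const_mul]
  refine norm_integral_le_of_norm_le (hφ.abs.const_mul M) (Eventually.of_forall fun x => ?_)
  rw [Real.norm_eq_abs, abs_mul, mul_comm]
  exact mul_le_mul_of_nonneg_right (hfM _) (abs_nonneg _)

lemma abs_integral_dotProduct_mul_comp_sub_dotProduct_le (hfM : ∀ t, |f t| ≤ M)
    (hX : Integrable vnorm μX) (h β₀ : Fin d → ℝ) (y : ℝ) :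
    |∫ x, (h ⬝ᵥ x) * f (y - β₀ ⬝ᵥ x) ∂μX| ≤ M * (vnorm h * ∫ x, vnorm x ∂μX) := by
  refine (abs_integral_mul_comp_sub_dotProduct_le hfM
    (integrable_dotProduct_of_integrable_vnorm hX h) β₀ y).trans ?_
  rw [← integral_const_mul (vnorm h)]
  exact mul_le_mul_of_nonneg_left (integral_mono
    (integrable_dotProduct_of_integrable_vnorm hX h).abs (hX.const_mul _)
    fun x => abs_dotProduct_le_vnorm_mul_vnorm h x) ((abs_nonneg _).trans (hfM 0))

lemma abs_integral_cdfOf_sub_sub_integral_le [IsProbabilityMeasure μX] [IsProbabilityMeasure μeps]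
    (hf0 : ∀ t, 0 ≤ f t) (hμ : μeps = volume.withDensity fun t => ENNReal.ofReal (f t))
    (hfM : ∀ t, |f t| ≤ M) {L : ℝ≥0} (hfL : LipschitzWith L f)
    (hX2 : Integrable (fun x => vnorm x ^ 2) μX) (β₀ β : Fin d → ℝ) (y : ℝ) :
    |(∫ x, cdfOf μeps (y - β₀ ⬝ᵥ x) ∂μX - ∫ x, cdfOf μeps (y - β ⬝ᵥ x) ∂μX)
        - ∫ x, ((β - β₀) ⬝ᵥ x) * f (y - β₀ ⬝ᵥ x) ∂μX|
      ≤ L * (vnorm (β - β₀) ^ 2 * ∫ x, vnorm x ^ 2 ∂μX) := by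
  have hlin := integrable_mul_comp_sub_dotProduct hfM hfL.continuous
    (integrable_dotProduct_of_integrable_vnorm (integrable_vnorm hX2) (β - β₀)) β₀ y
  have hF₀ := integrable_cdfOf_sub_dotProduct (μX := μX) (μeps := μeps) β₀ y
  have hF := integrable_cdfOf_sub_dotProduct (μX := μX) (μeps := μeps) β y
  have hcomb : (∫ x, cdfOf μeps (y - β₀ ⬝ᵥ x) ∂μX - ∫ x, cdfOf μeps (y - β ⬝ᵥ x) ∂μX)
      - ∫ x, ((β - β₀) ⬝ᵥ x) * f (y - β₀ ⬝ᵥ x) ∂μX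
      = ∫ x, (cdfOf μeps (y - β₀ ⬝ᵥ x) - cdfOf μeps (y - β ⬝ᵥ x)
          - ((β - β₀) ⬝ᵥ x) * f (y - β₀ ⬝ᵥ x)) ∂μX := by
    rw [integral_sub (by exact hF₀.sub hF) hlin, integral_sub hF₀ hF]
  rw [hcomb, ← integral_const_mul, ← integral_const_mul, ← Real.norm_eq_abs]
  refine norm_integral_le_of_norm_le ((hX2.const_mul _).const_mul _)
    (Eventually.of_forall fun x => ?_)
  have htaylor : |cdfOf μeps (y - β₀ ⬝ᵥ x) - cdfOf μeps (y - β ⬝ᵥ x)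
      - ((β - β₀) ⬝ᵥ x) * f (y - β₀ ⬝ᵥ x)| ≤ L * ((β - β₀) ⬝ᵥ x) ^ 2 := by
    rw [← abs_neg]
    convert abs_cdfOf_sub_sub_mul_le hf0 hμ hfL (y - β₀ ⬝ᵥ x) (y - β ⬝ᵥ x) using 2 <;>
      (rw [sub_dotProduct]; ring)
  rw [Real.norm_eq_abs]
  calc _ ≤ L * ((β - β₀) ⬝ᵥ x) ^ 2 := htaylor
    _ ≤ L * (vnorm (β - β₀) ^ 2 * vnorm x ^ 2) := by
        gcongr
        rw [← mul_pow, ← sq_abs]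
        gcongr
        exact abs_dotProduct_le_vnorm_mul_vnorm _ _

lemma memLp_integral_mul_comp_sub_dotProduct {μY : Measure ℝ} [IsFiniteMeasure μY] [SFinite μX]
    (hfM : ∀ t, |f t| ≤ M) (hfc : Continuous f) {φ : (Fin d → ℝ) → ℝ} (hφc : Continuous φ)
    (hφ : Integrable φ μX) (β₀ : Fin d → ℝ) :
    MemLp (fun y => ∫ x, φ x * f (y - β₀ ⬝ᵥ x) ∂μX) 2 μY :=
  have hmeas := (Continuous.stronglyMeasurable (f := fun p : ℝ × (Fin d → ℝ) =>
    φ p.2 * f (p.1 - β₀ ⬝ᵥ p.2)) (by fun_prop)).integral_prod_right' (ν := μX)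
  .of_bound hmeas.aestronglyMeasurable (M * ∫ x, |φ x| ∂μX)
    (Eventually.of_forall fun y => abs_integral_mul_comp_sub_dotProduct_le hfM hφ β₀ y)

lemma integrable_sq_integral_cdfOf_sub_sub {μY : Measure ℝ} [IsFiniteMeasure μY]
    [IsProbabilityMeasure μX] [IsProbabilityMeasure μeps] (β₀ β : Fin d → ℝ) :
    Integrable (fun y =>
      (∫ x, cdfOf μeps (y - β₀ ⬝ᵥ x) ∂μX - ∫ x, cdfOf μeps (y - β ⬝ᵥ x) ∂μX) ^ 2) μY := by
  refine .of_bound (((measurable_integral_cdfOf_sub_dotProduct β₀).sub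
    (measurable_integral_cdfOf_sub_dotProduct β)).pow_const 2).aestronglyMeasurable 1
    (Eventually.of_forall fun y => ?_)
  obtain ⟨h₀, h₁⟩ := integral_cdfOf_sub_dotProduct_mem_Icc (μX := μX) (μeps := μeps) β₀ y
  obtain ⟨h₀', h₁'⟩ := integral_cdfOf_sub_dotProduct_mem_Icc (μX := μX) (μeps := μeps) β y
  rw [Real.norm_eq_abs, abs_sq, sq_le_one_iff_abs_le_one]
  exact abs_sub_le_of_nonneg_of_le h₀ h₁ h₀' h₁'

lemma sq_integral_dotProduct_mul_sub_mul_pow_three_le [IsProbabilityMeasure μX]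
    [IsProbabilityMeasure μeps] (hf0 : ∀ t, 0 ≤ f t)
    (hμ : μeps = volume.withDensity fun t => ENNReal.ofReal (f t))
    (hfM : ∀ t, |f t| ≤ M) {L : ℝ≥0} (hfL : LipschitzWith L f)
    (hX2 : Integrable (fun x => vnorm x ^ 2) μX) (β₀ β : Fin d → ℝ) (y : ℝ) :
    (∫ x, ((β - β₀) ⬝ᵥ x) * f (y - β₀ ⬝ᵥ x) ∂μX) ^ 2
        - 2 * M * L * (∫ x, vnorm x ∂μX) * (∫ x, vnorm x ^ 2 ∂μX) * vnorm (β - β₀) ^ 3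
      ≤ (∫ x, cdfOf μeps (y - β₀ ⬝ᵥ x) ∂μX - ∫ x, cdfOf μeps (y - β ⬝ᵥ x) ∂μX) ^ 2 :=
  le_trans (le_of_eq (by ring)) (sq_sub_two_mul_mul_le_sq
    (abs_integral_dotProduct_mul_comp_sub_dotProduct_le hfM (integrable_vnorm hX2) _ β₀ y)
    (abs_integral_cdfOf_sub_sub_integral_le hf0 hμ hfM hfL hX2 β₀ β y))

end Linearization

theorem dotProduct_mulVec_sub_mul_pow_three_le_Dpop {d : ℕ} {μX : Measure (Fin d → ℝ)}
    {μeps μY : Measure ℝ} [IsProbabilityMeasure μX] [IsProbabilityMeasure μeps]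
    {β₀ : Fin d → ℝ} (hmodel : UnlinkedModel μX μeps β₀ μY) {f : ℝ → ℝ} {M : ℝ}
    (hf0 : ∀ t, 0 ≤ f t) (hμ : μeps = volume.withDensity fun t => ENNReal.ofReal (f t))
    (hfM : ∀ t, |f t| ≤ M) {L : ℝ≥0} (hfL : LipschitzWith L f)
    (hX2 : Integrable (fun x => vnorm x ^ 2) μX) (β : Fin d → ℝ) :
    (β - β₀) ⬝ᵥ (Matrix.of fun i j => ∫ y, (∫ x, x i * f (y - β₀ ⬝ᵥ x) ∂μX) *
        (∫ x, x j * f (y - β₀ ⬝ᵥ x) ∂μX) ∂μY) *ᵥ (β - β₀)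
      - 2 * M * L * (∫ x, vnorm x ∂μX) * (∫ x, vnorm x ^ 2 ∂μX) * vnorm (β - β₀) ^ 3
      ≤ Dpop (cdfOf μeps) μX μY β := by
  have := hmodel.isProbabilityMeasure
  have hX := integrable_vnorm hX2
  have hv : ∀ i, MemLp (fun y => ∫ x, x i * f (y - β₀ ⬝ᵥ x) ∂μX) 2 μY := fun i =>
    memLp_integral_mul_comp_sub_dotProduct hfM hfL.continuous (continuous_apply i)
      (integrable_apply_of_integrable_vnorm hX i) β₀
  have hG : ∀ y, ∑ i, (β - β₀) i * ∫ x, x i * f (y - β₀ ⬝ᵥ x) ∂μX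
      = ∫ x, ((β - β₀) ⬝ᵥ x) * f (y - β₀ ⬝ᵥ x) ∂μX := fun y =>
    (integral_dotProduct_mul _ (X := fun x => x) fun i => integrable_mul_comp_sub_dotProduct
      hfM hfL.continuous (integrable_apply_of_integrable_vnorm hX i) β₀ y).symm
  have hGint : Integrable (fun y => (∑ i, (β - β₀) i * ∫ x, x i * f (y - β₀ ⬝ᵥ x) ∂μX) ^ 2) μY :=
    (memLp_finsetSum _ fun i _ => (hv i).const_mul _).integrable_sq
  have hintegral := integral_sub hGint (integrable_const (μ := μY)
    (2 * M * L * (∫ x, vnorm x ∂μX) * (∫ x, vnorm x ^ 2 ∂μX) * vnorm (β - β₀) ^ 3))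
  rw [integral_sq_sum_mul_eq_dotProduct_mulVec _ hv, integral_const, probReal_univ, one_smul]
    at hintegral
  rw [← hintegral]
  simp only [Dpop, hmodel.cdfOf_eq_integral]
  refine integral_mono (hGint.sub (integrable_const _))
    (integrable_sq_integral_cdfOf_sub_sub β₀ β) fun y => ?_
  simpa only [hG] using
    sq_integral_dotProduct_mul_sub_mul_pow_three_le hf0 hμ hfM hfL hX2 β₀ β y

theorem population_criterion_quadratic_lower_bound_general
    {d : ℕ} (μX : Measure (Fin d → ℝ)) (μeps μY : Measure ℝ)
    [IsProbabilityMeasure μX] [IsProbabilityMeasure μeps]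
    (β₀ : Fin d → ℝ) (hmodel : UnlinkedModel μX μeps β₀ μY)
    (feps : ℝ → ℝ) (hfnonneg : ∀ t, 0 ≤ feps t)
    (hdensity : μeps = volume.withDensity fun t => ENNReal.ofReal (feps t))
    (hC2 : ContDiff ℝ 2 feps)
    (M : ℝ) (hfbound : ∀ t, feps t ≤ M)
    (hf'bound : ∀ t, |deriv feps t| ≤ M)
    (hX2 : Integrable (fun x : Fin d → ℝ => ∑ i, x i ^ 2) μX)
    (hU : Matrix.PosDef (Matrix.of fun i j : Fin d =>
      ∫ y, (∫ x, x i * feps (y - β₀ ⬝ᵥ x) ∂μX) *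
        (∫ x, x j * feps (y - β₀ ⬝ᵥ x) ∂μX) ∂μY)) :
    ∃ C : ℝ, 0 < C ∧ ∃ δ : ℝ, 0 < δ ∧ ∀ β : Fin d → ℝ, vnorm (β - β₀) < δ →
      C * vnorm (β - β₀) ^ 2 ≤ Dpop (cdfOf μeps) μX μY β := by
  have hM : 0 ≤ M := (abs_nonneg _).trans (hf'bound 0)
  have hfL : LipschitzWith M.toNNReal feps :=
    lipschitzWith_of_nnnorm_deriv_le (hC2.differentiable (by norm_num)) fun t => by
      rw [← NNReal.coe_le_coe, coe_nnnorm, Real.coe_toNNReal _ hM]; exact hf'bound t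
  have hfM : ∀ t, |feps t| ≤ M := fun t => (abs_of_nonneg (hfnonneg t)).trans_le (hfbound t)
  have hX2' : Integrable (fun x => vnorm x ^ 2) μX := by simpa only [vnorm_sq] using hX2
  obtain ⟨c, hc, hcU⟩ := hU.exists_pos_mul_vnorm_sq_le
  refine exists_mul_sq_le_of_sub_mul_pow_three_le hc ?_ (fun β => vnorm_nonneg (β - β₀))
    fun β => (sub_le_sub_right (hcU (β - β₀)) _).trans
      (dotProduct_mulVec_sub_mul_pow_three_le_Dpop hmodel hfnonneg hdensity hfM hfL hX2' β)
  have h₁ : 0 ≤ ∫ x, vnorm x ∂μX := integral_nonneg vnorm_nonneg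
  have h₂ : 0 ≤ ∫ x, vnorm x ^ 2 ∂μX := integral_nonneg fun x => sq_nonneg _
  positivity

/-- **Local quadratic lower bound for the population criterion.**  If the
noise density `f^ε` is `C²` with `f^ε ≤ M` and `|(f^ε)'| ≤ M`, `E‖X‖² < ∞`, and the matrix
`U` is positive definite, then there is a neighborhood of `β₀` and `C > 0` such that
`D_{2,F^Y}(β) ≥ C ‖β - β₀‖²` on that neighborhood. -/
theorem population_criterion_quadratic_lower_bound
    {d : ℕ} (μX : Measure (Fin d → ℝ)) (μeps μY : Measure ℝ)
    [IsProbabilityMeasure μX] [IsProbabilityMeasure μeps]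
    (β₀ : Fin d → ℝ) (hmodel : UnlinkedModel μX μeps β₀ μY)
    (feps : ℝ → ℝ) (hfnonneg : ∀ t, 0 ≤ feps t)
    (hdensity : μeps = volume.withDensity fun t => ENNReal.ofReal (feps t))
    (hC2 : ContDiff ℝ 2 feps)
    (M : ℝ) (hM : 0 < M) (hfbound : ∀ t, feps t ≤ M)
    (hf'bound : ∀ t, |deriv feps t| ≤ M)
    (hX2 : Integrable (fun x : Fin d → ℝ => ∑ i, x i ^ 2) μX)
    (hU : Matrix.PosDef (Matrix.of fun i j : Fin d =>
      ∫ y, (∫ x, x i * feps (y - β₀ ⬝ᵥ x) ∂μX) *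
        (∫ x, x j * feps (y - β₀ ⬝ᵥ x) ∂μX) ∂μY)) :
    ∃ C : ℝ, 0 < C ∧ ∃ δ : ℝ, 0 < δ ∧ ∀ β : Fin d → ℝ, vnorm (β - β₀) < δ →
      C * vnorm (β - β₀) ^ 2 ≤ Dpop (cdfOf μeps) μX μY β :=
  population_criterion_quadratic_lower_bound_general μX μeps μY β₀ hmodel feps hfnonneg hdensity hC2
    M hfbound hf'bound hX2 hU
end
end

section
/- Assume F^ε admits a density f^ε ∈ C¹ with f^ε ≤ M and |(f^ε)'| ≤ M for some M > 0, and E‖X‖²_2 < ∞. Then the function ψ(β) = D_{2,F^Y}(β) is twice continuously differentiable on R^d, its gradient vanishes at β_0, and its Hessian at β_0 equals 2U, where U = ∫ (∫ x f^ε(y − β_0^T x) dF^X(x)) (∫ x^T f^ε(y − β_0^T x) dF^X(x)) dF^Y(y). -/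
open MeasureTheory ProbabilityTheory Filter Matrix
open scoped ENNReal NNReal Topology

noncomputable section

/-!
Write `g(β, y) = ∫ F^ε(y - βᵀx) dF^X(x)`, so that `ψ(β) = ∫ (F^Y - g(β, ·))² dF^Y`. The
`β`-derivatives of the integrand of `g` are `-f^ε(y - βᵀx) xᵀ` and `(f^ε)'(y - βᵀx) x xᵀ`,
dominated by `M‖x‖` and `M‖x‖²` uniformly in `(β, y)`; these are integrable since
`E‖X‖² < ∞`, so `g` is twice differentiable under the integral sign, with derivatives
jointly continuous and bounded in `(β, y)`. Because `F^Y` and `g` are bounded, `ψ` can then be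
differentiated twice under the outer integral, and its Hessian is continuous by dominated
convergence. In the model, `F^Y = g(β₀, ·)`: this kills the gradient
`-2 ∫ (F^Y - g) ∂_β g dF^Y` at `β₀`, and of the Hessian only `2 ∫ ∂_β g ∂_β gᵀ dF^Y = 2U`
survives there.
-/

open Set Function

@[fun_prop]
lemma Continuous.smulRight {X 𝕜 E F : Type*} [TopologicalSpace X] [NontriviallyNormedField 𝕜]
    [NormedAddCommGroup E] [NormedSpace 𝕜 E] [NormedAddCommGroup F] [NormedSpace 𝕜 F]
    {c : X → StrongDual 𝕜 E} {f : X → F} (hc : Continuous c) (hf : Continuous f) :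
    Continuous fun x => (c x).smulRight (f x) :=
  isBoundedBilinearMap_smulRight.continuous.comp (hc.prodMk hf)

theorem hasFDerivAt_integral_of_forall_norm_fderiv_le {α H E 𝕜 : Type*} [MeasurableSpace α]
    {μ : Measure α} [RCLike 𝕜] [NormedAddCommGroup E] [NormedSpace ℝ E] [NormedSpace 𝕜 E]
    [NormedAddCommGroup H] [NormedSpace 𝕜 H] {F : H → α → E} {F' : H → α → H →L[𝕜] E}
    {bound : α → ℝ} {x₀ : H} (hF_meas : ∀ x, AEStronglyMeasurable (F x) μ)
    (hF_int : Integrable (F x₀) μ) (hF'_meas : AEStronglyMeasurable (F' x₀) μ)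
    (h_bound : ∀ x a, ‖F' x a‖ ≤ bound a) (bound_integrable : Integrable bound μ)
    (h_diff : ∀ x a, HasFDerivAt (F · a) (F' x a) x) :
    HasFDerivAt (fun x => ∫ a, F x a ∂μ) (∫ a, F' x₀ a ∂μ) x₀ :=
  hasFDerivAt_integral_of_dominated_of_fderiv_le univ_mem (Eventually.of_forall hF_meas)
    hF_int hF'_meas (ae_of_all _ fun a x _ => h_bound x a) bound_integrable
    (ae_of_all _ fun a x _ => h_diff x a)

theorem contDiff_two_of_hasFDerivAt {E F : Type*} [NormedAddCommGroup E] [NormedSpace ℝ E]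
    [NormedAddCommGroup F] [NormedSpace ℝ F] {f : E → F} {f' : E → E →L[ℝ] F}
    {f'' : E → E →L[ℝ] E →L[ℝ] F} (hf : ∀ x, HasFDerivAt f (f' x) x)
    (hf' : ∀ x, HasFDerivAt f' (f'' x) x) (hf'' : Continuous f'') : ContDiff ℝ 2 f := by
  have hfderiv : fderiv ℝ f = f' := funext fun x => (hf x).fderiv
  have hfderiv' : fderiv ℝ f' = f'' := funext fun x => (hf' x).fderiv
  rw [show (2 : WithTop ℕ∞) = 1 + 1 from rfl, contDiff_succ_iff_fderiv, hfderiv,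
    contDiff_one_iff_fderiv, hfderiv']
  exact ⟨fun x => (hf x).differentiableAt, by simp, fun x => (hf' x).differentiableAt, hf''⟩

section DotProduct

variable {d : ℕ}

def dotCLM : (Fin d → ℝ) →L[ℝ] (Fin d → ℝ) →L[ℝ] ℝ :=
  LinearMap.toContinuousLinearMap
    ((LinearMap.toContinuousLinearMap : ((Fin d → ℝ) →ₗ[ℝ] ℝ) ≃ₗ[ℝ] _).toLinearMap ∘ₗ
      dotProductBilin ℝ ℝ)

@[simp] lemma dotCLM_apply (x v : Fin d → ℝ) : dotCLM x v = v ⬝ᵥ x := by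
  simp [dotCLM, dotProduct_comm]

lemma hasFDerivAt_sub_dotProduct (x β : Fin d → ℝ) (y : ℝ) :
    HasFDerivAt (fun β => y - β ⬝ᵥ x) (-dotCLM x) β := by
  have h := (hasFDerivAt_const y β).sub (dotCLM x).hasFDerivAt
  rw [zero_sub] at h
  exact h.congr_of_eventuallyEq (.of_forall fun β' => by simp)

lemma norm_smulRight_dotCLM_le {V : Type*} [NormedAddCommGroup V] [NormedSpace ℝ V]
    (x : Fin d → ℝ) (w : V) : ‖(dotCLM x).smulRight w‖ ≤ ‖dotCLM (d := d)‖ * ‖x‖ * ‖w‖ := by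
  rw [ContinuousLinearMap.norm_smulRight_apply]
  gcongr
  exact dotCLM.le_opNorm x

lemma ContinuousLinearMap.apply_apply_eq_dotProduct_mulVec
    (B : (Fin d → ℝ) →L[ℝ] (Fin d → ℝ) →L[ℝ] ℝ) (v w : Fin d → ℝ) :
    B v w = v ⬝ᵥ (Matrix.of fun i j => B (Pi.single i 1) (Pi.single j 1)) *ᵥ w := by
  conv_lhs => rw [pi_eq_sum_univ' v, pi_eq_sum_univ' w]
  simp [Matrix.mulVec, dotProduct, Finset.mul_sum, mul_left_comm, mul_comm]
  rw [Finset.sum_comm]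

lemma sq_norm_le_sum_sq (x : Fin d → ℝ) : ‖x‖ ^ 2 ≤ ∑ i, x i ^ 2 := by
  have hx : ‖x‖ ≤ √(∑ i, x i ^ 2) := (pi_norm_le_iff_of_nonneg (Real.sqrt_nonneg _)).2
    fun i => Real.abs_le_sqrt (Finset.single_le_sum (fun j _ => sq_nonneg (x j))
      (Finset.mem_univ i))
  calc ‖x‖ ^ 2 ≤ √(∑ i, x i ^ 2) ^ 2 := by gcongr
    _ = ∑ i, x i ^ 2 := Real.sq_sqrt (Finset.sum_nonneg fun i _ => sq_nonneg (x i))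

variable {μ : Measure (Fin d → ℝ)}

lemma memLp_two_of_integrable_sum_sq (h : Integrable (fun x : Fin d → ℝ => ∑ i, x i ^ 2) μ) :
    MemLp id 2 μ :=
  (memLp_two_iff_integrable_sq_norm aestronglyMeasurable_id).2 <|
    h.mono' (by fun_prop : Continuous _).aestronglyMeasurable (ae_of_all _ fun x => by
      rw [Real.norm_eq_abs, abs_of_nonneg (sq_nonneg _)]
      exact sq_norm_le_sum_sq x)

lemma integrable_dotCLM (hX : Integrable id μ) : Integrable (dotCLM (d := d)) μ :=
  (hX.norm.const_mul ‖dotCLM (d := d)‖).mono' dotCLM.continuous.aestronglyMeasurable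
    (ae_of_all _ fun x => dotCLM.le_opNorm x)

lemma integrable_norm_mul_norm_dotCLM [IsFiniteMeasure μ] (hX : MemLp id 2 μ) :
    Integrable (fun x => ‖x‖ * ‖dotCLM x‖) μ := by
  refine ((hX.integrable_norm_pow' (p := 2)).const_mul ‖dotCLM (d := d)‖).mono'
    (by fun_prop : Continuous _).aestronglyMeasurable (ae_of_all _ fun x => ?_)
  rw [norm_mul, norm_norm, norm_norm, id, sq, ← mul_assoc, mul_comm _ ‖x‖]
  gcongr
  exact dotCLM.le_opNorm x

end DotProduct

section DotConv

variable {d : ℕ} {V : Type*} [NormedAddCommGroup V] [NormedSpace ℝ V]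
  {μ : Measure (Fin d → ℝ)} {W : (Fin d → ℝ) → V} {φ φ' : ℝ → ℝ} {K : ℝ}

/-- With `W = 1`, this is the convolution of `φ` with the law of `βᵀX`, `X ∼ μ`; the weight `W`
collects the polynomial factors in `x` produced by differentiating in `β`. -/
def dotConv (μ : Measure (Fin d → ℝ)) (W : (Fin d → ℝ) → V) (φ : ℝ → ℝ) (β : Fin d → ℝ)
    (y : ℝ) : V :=
  ∫ x, φ (y - β ⬝ᵥ x) • W x ∂μ

lemma norm_comp_sub_dotProduct_smul_le (hφK : ∀ t, |φ t| ≤ K) (β x : Fin d → ℝ) (y : ℝ) :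
    ‖φ (y - β ⬝ᵥ x) • W x‖ ≤ K * ‖W x‖ := by
  rw [norm_smul, Real.norm_eq_abs]
  exact mul_le_mul_of_nonneg_right (hφK _) (norm_nonneg _)

lemma integrable_comp_sub_dotProduct_smul (hφ : Continuous φ) (hφK : ∀ t, |φ t| ≤ K)
    (hW : Continuous W) (hWi : Integrable W μ) (β : Fin d → ℝ) (y : ℝ) :
    Integrable (fun x => φ (y - β ⬝ᵥ x) • W x) μ :=
  (hWi.norm.const_mul K).mono' (by fun_prop : Continuous _).aestronglyMeasurable
    (ae_of_all _ fun x => norm_comp_sub_dotProduct_smul_le hφK β x y)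

lemma norm_dotConv_le (hφK : ∀ t, |φ t| ≤ K) (hWi : Integrable W μ) (β : Fin d → ℝ) (y : ℝ) :
    ‖dotConv μ W φ β y‖ ≤ K * ∫ x, ‖W x‖ ∂μ := by
  rw [← integral_const_mul]
  exact norm_integral_le_of_norm_le (hWi.norm.const_mul K)
    (ae_of_all _ fun x => norm_comp_sub_dotProduct_smul_le hφK β x y)

lemma continuous_dotConv (hφ : Continuous φ) (hφK : ∀ t, |φ t| ≤ K) (hW : Continuous W)
    (hWi : Integrable W μ) : Continuous (uncurry (dotConv μ W φ)) :=
  continuous_of_dominated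
    (fun p => (integrable_comp_sub_dotProduct_smul hφ hφK hW hWi p.1 p.2).aestronglyMeasurable)
    (fun p => ae_of_all _ fun x => norm_comp_sub_dotProduct_smul_le hφK p.1 x p.2)
    (hWi.norm.const_mul K) (ae_of_all _ fun x => by fun_prop)

lemma hasFDerivAt_comp_sub_dotProduct_smul (hφ : ∀ t, HasDerivAt φ (φ' t) t)
    (x β : Fin d → ℝ) (y : ℝ) :
    HasFDerivAt (fun β => φ (y - β ⬝ᵥ x) • W x)
      (-(φ' (y - β ⬝ᵥ x) • (dotCLM x).smulRight (W x))) β := by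
  refine (((hφ _).comp_hasFDerivAt β (hasFDerivAt_sub_dotProduct x β y)).smul_const
    (W x)).congr_fderiv ?_
  ext v
  simp [smul_smul, mul_comm]

lemma integrable_smulRight_dotCLM (hW : Continuous W)
    (hxW : Integrable (fun x => ‖x‖ * ‖W x‖) μ) :
    Integrable (fun x => (dotCLM x).smulRight (W x)) μ :=
  (hxW.const_mul ‖dotCLM (d := d)‖).mono' (dotCLM.continuous.smulRight hW).aestronglyMeasurable
    (ae_of_all _ fun x => (norm_smulRight_dotCLM_le x (W x)).trans_eq (mul_assoc _ _ _))

theorem hasFDerivAt_dotConv (hφ : ∀ t, HasDerivAt φ (φ' t) t) (hφ' : Continuous φ')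
    (hφK : ∀ t, |φ t| ≤ K) (hφ'K : ∀ t, |φ' t| ≤ K) (hW : Continuous W) (hWi : Integrable W μ)
    (hxW : Integrable (fun x => ‖x‖ * ‖W x‖) μ) (β : Fin d → ℝ) (y : ℝ) :
    HasFDerivAt (dotConv μ W φ · y)
      (-dotConv μ (fun x => (dotCLM x).smulRight (W x)) φ' β y) β := by
  have hφc : Continuous φ := continuous_iff_continuousAt.2 fun t => (hφ t).continuousAt
  have hW' : Continuous fun x => (dotCLM x).smulRight (W x) := dotCLM.continuous.smulRight hW
  have hW'i := integrable_smulRight_dotCLM hW hxW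
  rw [dotConv, ← integral_neg]
  refine hasFDerivAt_integral_of_forall_norm_fderiv_le
    (fun β => (integrable_comp_sub_dotProduct_smul hφc hφK hW hWi β y).aestronglyMeasurable)
    (integrable_comp_sub_dotProduct_smul hφc hφK hW hWi β y)
    (integrable_comp_sub_dotProduct_smul hφ' hφ'K hW' hW'i β y).neg.aestronglyMeasurable
    (fun β x => ?_) (hW'i.norm.const_mul K)
    (fun β x => hasFDerivAt_comp_sub_dotProduct_smul hφ x β y)
  rw [norm_neg]
  exact norm_comp_sub_dotProduct_smul_le (W := fun x => (dotCLM x).smulRight (W x)) hφ'K β x y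

lemma dotConv_dotCLM_apply_single (hφ : Continuous φ) (hφK : ∀ t, |φ t| ≤ K)
    (hX : Integrable id μ) (β : Fin d → ℝ) (y : ℝ) (i : Fin d) :
    dotConv μ dotCLM φ β y (Pi.single i 1) = ∫ x, x i * φ (y - β ⬝ᵥ x) ∂μ := by
  rw [dotConv, ContinuousLinearMap.integral_apply (integrable_comp_sub_dotProduct_smul hφ hφK
    dotCLM.continuous (integrable_dotCLM hX) β y)]
  simp [mul_comm]

end DotConv

structure IsBoundedC2 (F : ℝ → ℝ) (M : ℝ) : Prop where
  contDiff : ContDiff ℝ 2 F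
  abs_le : ∀ t, |F t| ≤ M
  abs_deriv_le : ∀ t, |deriv F t| ≤ M
  abs_deriv_deriv_le : ∀ t, |deriv (deriv F) t| ≤ M

namespace IsBoundedC2

variable {F : ℝ → ℝ} {M : ℝ}

lemma contDiff_deriv (hF : IsBoundedC2 F M) : ContDiff ℝ 1 (deriv F) :=
  (contDiff_succ_iff_deriv.1 hF.contDiff).2.2

lemma hasDerivAt (hF : IsBoundedC2 F M) (t : ℝ) : HasDerivAt F (deriv F t) t :=
  (hF.contDiff.differentiable two_ne_zero t).hasDerivAt

lemma hasDerivAt_deriv (hF : IsBoundedC2 F M) (t : ℝ) :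
    HasDerivAt (deriv F) (deriv (deriv F) t) t :=
  (hF.contDiff_deriv.differentiable one_ne_zero t).hasDerivAt

lemma continuous_deriv_deriv (hF : IsBoundedC2 F M) : Continuous (deriv (deriv F)) :=
  hF.contDiff_deriv.continuous_deriv le_rfl

end IsBoundedC2

section Cdf

variable {μ : Measure ℝ} {f : ℝ → ℝ}

variable (μ) in
lemma abs_cdfOf_le [IsFiniteMeasure μ] (y : ℝ) : |cdfOf μ y| ≤ μ.real univ := by
  rw [cdfOf, abs_of_nonneg ENNReal.toReal_nonneg]
  exact measureReal_mono (subset_univ _)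

variable (μ) in
lemma measurable_cdfOf [IsFiniteMeasure μ] : Measurable (cdfOf μ) :=
  Monotone.measurable fun _ _ hst => measureReal_mono (Iic_subset_Iic.2 hst)

lemma hasDerivAt_cdfOf_of_density [IsFiniteMeasure μ]
    (hμ : μ = volume.withDensity fun t => ENNReal.ofReal (f t)) (hf : Continuous f)
    (hf0 : ∀ t, 0 ≤ f t) (t : ℝ) : HasDerivAt (cdfOf μ) (f t) t := by
  have hfi : Integrable f := by
    rw [← lintegral_ofReal_ne_top_iff_integrable hf.aestronglyMeasurable (ae_of_all _ hf0)]
    have := measure_ne_top μ univ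
    rwa [hμ, withDensity_apply _ MeasurableSet.univ, Measure.restrict_univ] at this
  have hcdf : ∀ u, cdfOf μ u = ∫ s in Iic u, f s := fun u => by
    rw [cdfOf, hμ, withDensity_apply _ measurableSet_Iic, integral_eq_lintegral_of_nonneg_ae
      (ae_of_all _ hf0) hf.aestronglyMeasurable.restrict]
  have hcdf_sub : ∀ u, cdfOf μ u = cdfOf μ t + ∫ s in t..u, f s := fun u => by
    rw [hcdf, hcdf, ← intervalIntegral.integral_Iic_sub_Iic hfi.integrableOn hfi.integrableOn]
    ring
  exact ((intervalIntegral.integral_hasStrictDerivAt_right hfi.intervalIntegrable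
    (hf.stronglyMeasurableAtFilter _ _) hf.continuousAt).hasDerivAt.const_add _)
      |>.congr_of_eventuallyEq (.of_forall hcdf_sub)

lemma deriv_cdfOf_of_density [IsFiniteMeasure μ]
    (hμ : μ = volume.withDensity fun t => ENNReal.ofReal (f t)) (hf : Continuous f)
    (hf0 : ∀ t, 0 ≤ f t) : deriv (cdfOf μ) = f :=
  funext fun t => (hasDerivAt_cdfOf_of_density hμ hf hf0 t).deriv

lemma isBoundedC2_cdfOf_of_density [IsProbabilityMeasure μ] {M : ℝ}
    (hμ : μ = volume.withDensity fun t => ENNReal.ofReal (f t)) (hf0 : ∀ t, 0 ≤ f t)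
    (hf : ContDiff ℝ 1 f) (hfM : ∀ t, f t ≤ M) (hf'M : ∀ t, |deriv f t| ≤ M) :
    IsBoundedC2 (cdfOf μ) (max M 1) := by
  have hderiv := deriv_cdfOf_of_density hμ hf.continuous hf0
  refine ⟨contDiff_succ_iff_deriv.2 ⟨fun t => ?_, by simp, hderiv ▸ hf⟩,
    fun t => ?_, fun t => ?_, fun t => ?_⟩
  · exact (hasDerivAt_cdfOf_of_density hμ hf.continuous hf0 t).differentiableAt
  · exact (abs_cdfOf_le μ t).trans (by simp)
  · rw [hderiv, abs_of_nonneg (hf0 t)]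
    exact (hfM t).trans (le_max_left _ _)
  · rw [hderiv]
    exact (hf'M t).trans (le_max_left _ _)

end Cdf

section Criterion

variable {d : ℕ} {F : ℝ → ℝ} {M : ℝ} {μX : Measure (Fin d → ℝ)} {μY : Measure ℝ}

variable (F μX μY) in
lemma Dpop_eq_integral_dotConv :
    Dpop F μX μY = fun β => ∫ y, (cdfOf μY y - dotConv μX (fun _ => (1 : ℝ)) F β y) ^ 2 ∂μY := by
  ext β
  simp [Dpop, dotConv]

variable (F μX μY) in
def gradDpopIntegrand (β : Fin d → ℝ) (y : ℝ) : (Fin d → ℝ) →L[ℝ] ℝ :=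
  (2 * (cdfOf μY y - dotConv μX (fun _ => (1 : ℝ)) F β y)) • dotConv μX dotCLM (deriv F) β y

variable (F μX μY) in
def gradDpop (β : Fin d → ℝ) : (Fin d → ℝ) →L[ℝ] ℝ := ∫ y, gradDpopIntegrand F μX μY β y ∂μY

variable (F μX μY) in
def hessDpopIntegrand (β : Fin d → ℝ) (y : ℝ) : (Fin d → ℝ) →L[ℝ] (Fin d → ℝ) →L[ℝ] ℝ :=
  ((2 : ℝ) • dotConv μX dotCLM (deriv F) β y).smulRight (dotConv μX dotCLM (deriv F) β y) -
    (2 * (cdfOf μY y - dotConv μX (fun _ => (1 : ℝ)) F β y)) •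
      dotConv μX (fun x => (dotCLM x).smulRight (dotCLM x)) (deriv (deriv F)) β y

variable (F μX μY) in
def hessDpop (β : Fin d → ℝ) : (Fin d → ℝ) →L[ℝ] (Fin d → ℝ) →L[ℝ] ℝ :=
  ∫ y, hessDpopIntegrand F μX μY β y ∂μY

lemma gradDpop_eq_zero {β₀ : Fin d → ℝ}
    (h : ∀ y, cdfOf μY y = dotConv μX (fun _ => (1 : ℝ)) F β₀ y) : gradDpop F μX μY β₀ = 0 := by
  simp [gradDpop, gradDpopIntegrand, h]

variable [IsFiniteMeasure μX]

lemma continuous_dotConv_one (hF : IsBoundedC2 F M) :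
    Continuous (uncurry (dotConv μX (fun _ => (1 : ℝ)) F)) :=
  continuous_dotConv hF.contDiff.continuous hF.abs_le continuous_const (integrable_const 1)

lemma continuous_dotConv_dotCLM (hF : IsBoundedC2 F M) (hX : MemLp id 2 μX) :
    Continuous (uncurry (dotConv μX dotCLM (deriv F))) :=
  continuous_dotConv hF.contDiff_deriv.continuous hF.abs_deriv_le dotCLM.continuous
    (integrable_dotCLM (hX.integrable one_le_two))

lemma continuous_dotConv_smulRight_dotCLM (hF : IsBoundedC2 F M) (hX : MemLp id 2 μX) :
    Continuous
      (uncurry (dotConv μX (fun x => (dotCLM x).smulRight (dotCLM x)) (deriv (deriv F)))) :=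
  continuous_dotConv hF.continuous_deriv_deriv hF.abs_deriv_deriv_le
    (dotCLM.continuous.smulRight dotCLM.continuous)
    (integrable_smulRight_dotCLM dotCLM.continuous (integrable_norm_mul_norm_dotCLM hX))

lemma hasFDerivAt_dotConv_one (hF : IsBoundedC2 F M) (hX : MemLp id 2 μX)
    (β : Fin d → ℝ) (y : ℝ) :
    HasFDerivAt (dotConv μX (fun _ => (1 : ℝ)) F · y) (-dotConv μX dotCLM (deriv F) β y) β := by
  have h := hasFDerivAt_dotConv hF.hasDerivAt hF.contDiff_deriv.continuous hF.abs_le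
    hF.abs_deriv_le continuous_const (integrable_const (1 : ℝ))
    (by simpa using (hX.integrable one_le_two).norm) (μ := μX) β y
  have hone : ∀ x : Fin d → ℝ, (dotCLM x).smulRight (1 : ℝ) = dotCLM x := fun x => by ext; simp
  simpa only [hone] using h

lemma hasFDerivAt_dotConv_dotCLM (hF : IsBoundedC2 F M) (hX : MemLp id 2 μX)
    (β : Fin d → ℝ) (y : ℝ) :
    HasFDerivAt (dotConv μX dotCLM (deriv F) · y)
      (-dotConv μX (fun x => (dotCLM x).smulRight (dotCLM x)) (deriv (deriv F)) β y) β :=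
  hasFDerivAt_dotConv hF.hasDerivAt_deriv hF.continuous_deriv_deriv hF.abs_deriv_le
    hF.abs_deriv_deriv_le dotCLM.continuous (integrable_dotCLM (hX.integrable one_le_two))
    (integrable_norm_mul_norm_dotCLM hX) β y

lemma hasFDerivAt_sq_cdfOf_sub_dotConv_one (hF : IsBoundedC2 F M) (hX : MemLp id 2 μX)
    (β : Fin d → ℝ) (y : ℝ) :
    HasFDerivAt (fun β => (cdfOf μY y - dotConv μX (fun _ => (1 : ℝ)) F β y) ^ 2)
      (gradDpopIntegrand F μX μY β y) β := by
  have h := ((hasFDerivAt_const (cdfOf μY y) β).sub (hasFDerivAt_dotConv_one hF hX β y)).pow 2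
  refine h.congr_fderiv ?_
  ext v
  simp [gradDpopIntegrand]

lemma hasFDerivAt_gradDpopIntegrand (hF : IsBoundedC2 F M) (hX : MemLp id 2 μX)
    (β : Fin d → ℝ) (y : ℝ) :
    HasFDerivAt (gradDpopIntegrand F μX μY · y) (hessDpopIntegrand F μX μY β y) β := by
  have h := (((hasFDerivAt_const (cdfOf μY y) β).sub
    (hasFDerivAt_dotConv_one hF hX β y)).const_mul 2).smul (hasFDerivAt_dotConv_dotCLM hF hX β y)
  refine h.congr_fderiv ?_
  ext v w
  simp [hessDpopIntegrand]
  ring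

variable [IsFiniteMeasure μY]

lemma measurable_cdfOf_sub_dotConv_one (hF : IsBoundedC2 F M) (β : Fin d → ℝ) :
    Measurable fun y => cdfOf μY y - dotConv μX (fun _ => (1 : ℝ)) F β y :=
  (measurable_cdfOf μY).sub ((continuous_dotConv_one hF).uncurry_left β).measurable

lemma abs_cdfOf_sub_dotConv_one_le (hF : IsBoundedC2 F M) (β : Fin d → ℝ) (y : ℝ) :
    |cdfOf μY y - dotConv μX (fun _ => (1 : ℝ)) F β y| ≤ μY.real univ + M * μX.real univ := by
  refine (abs_sub _ _).trans (add_le_add (abs_cdfOf_le μY y) ?_)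
  simpa using norm_dotConv_le hF.abs_le (integrable_const (1 : ℝ)) (μ := μX) β y

lemma exists_norm_gradDpopIntegrand_le (hF : IsBoundedC2 F M) (hX : MemLp id 2 μX) :
    ∃ C, ∀ β y, ‖gradDpopIntegrand F μX μY β y‖ ≤ C := by
  refine ⟨2 * (μY.real univ + M * μX.real univ) * (M * ∫ x, ‖dotCLM x‖ ∂μX), fun β y => ?_⟩
  have hcdf := abs_cdfOf_sub_dotConv_one_le (μX := μX) (μY := μY) hF β y
  have h₁ := norm_dotConv_le hF.abs_deriv_le (integrable_dotCLM (hX.integrable one_le_two)) β y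
  rw [gradDpopIntegrand, norm_smul, Real.norm_eq_abs, abs_mul, abs_two, mul_assoc, mul_assoc]
  refine mul_le_mul_of_nonneg_left ?_ zero_le_two
  exact mul_le_mul hcdf h₁ (norm_nonneg _) ((abs_nonneg _).trans hcdf)

lemma exists_norm_hessDpopIntegrand_le (hF : IsBoundedC2 F M) (hX : MemLp id 2 μX) :
    ∃ C, ∀ β y, ‖hessDpopIntegrand F μX μY β y‖ ≤ C := by
  set C₁ := M * ∫ x, ‖dotCLM x‖ ∂μX
  set C₂ := M * ∫ x, ‖(dotCLM x).smulRight (dotCLM x)‖ ∂μX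
  refine ⟨2 * C₁ * C₁ + 2 * (μY.real univ + M * μX.real univ) * C₂, fun β y => ?_⟩
  have hcdf := abs_cdfOf_sub_dotConv_one_le (μX := μX) (μY := μY) hF β y
  have h₁ := norm_dotConv_le hF.abs_deriv_le (integrable_dotCLM (hX.integrable one_le_two)) β y
  have h₂ := norm_dotConv_le hF.abs_deriv_deriv_le
    (integrable_smulRight_dotCLM dotCLM.continuous (integrable_norm_mul_norm_dotCLM hX)) β y
  refine (norm_sub_le (E := (Fin d → ℝ) →L[ℝ] (Fin d → ℝ) →L[ℝ] ℝ) _ _).trans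
    (add_le_add ?_ ?_)
  · rw [ContinuousLinearMap.norm_smulRight_apply, norm_smul, Real.norm_two, mul_assoc, mul_assoc]
    refine mul_le_mul_of_nonneg_left ?_ zero_le_two
    exact mul_le_mul h₁ h₁ (norm_nonneg _) ((norm_nonneg _).trans h₁)
  · refine (ContinuousLinearMap.opNorm_smul_le _ _).trans ?_
    rw [Real.norm_eq_abs, abs_mul, abs_two, mul_assoc, mul_assoc]
    refine mul_le_mul_of_nonneg_left ?_ zero_le_two
    exact mul_le_mul hcdf h₂ (norm_nonneg _) ((abs_nonneg _).trans hcdf)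

lemma aestronglyMeasurable_gradDpopIntegrand (hF : IsBoundedC2 F M) (hX : MemLp id 2 μX)
    (β : Fin d → ℝ) : AEStronglyMeasurable (gradDpopIntegrand F μX μY β) μY :=
  ((measurable_cdfOf_sub_dotConv_one hF β).const_mul 2).aestronglyMeasurable.smul
    ((continuous_dotConv_dotCLM hF hX).uncurry_left β).aestronglyMeasurable

lemma aestronglyMeasurable_hessDpopIntegrand (hF : IsBoundedC2 F M) (hX : MemLp id 2 μX)
    (β : Fin d → ℝ) : AEStronglyMeasurable (hessDpopIntegrand F μX μY β) μY := by
  have h₁ : Continuous (dotConv μX dotCLM (deriv F) β) :=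
    (continuous_dotConv_dotCLM hF hX).uncurry_left β
  have h₂ := (continuous_dotConv_smulRight_dotCLM hF hX).uncurry_left β
  exact ((h₁.const_smul (2 : ℝ)).smulRight h₁).aestronglyMeasurable.sub
    (((measurable_cdfOf_sub_dotConv_one (μY := μY) hF β).const_mul 2).aestronglyMeasurable.smul
      h₂.aestronglyMeasurable)

theorem hasFDerivAt_Dpop (hF : IsBoundedC2 F M) (hX : MemLp id 2 μX) (β : Fin d → ℝ) :
    HasFDerivAt (Dpop F μX μY) (gradDpop F μX μY β) β := by
  obtain ⟨C, hC⟩ := exists_norm_gradDpopIntegrand_le (μY := μY) hF hX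
  have hmeas := fun β => measurable_cdfOf_sub_dotConv_one (μX := μX) (μY := μY) hF β
  have hint : Integrable (fun y => (cdfOf μY y - dotConv μX (fun _ => (1 : ℝ)) F β y) ^ 2) μY :=
    .of_bound ((hmeas β).pow_const 2).aestronglyMeasurable _ (ae_of_all _ fun y => by
      rw [norm_pow, Real.norm_eq_abs]
      exact pow_le_pow_left₀ (abs_nonneg _) (abs_cdfOf_sub_dotConv_one_le hF β y) 2)
  rw [Dpop_eq_integral_dotConv]
  exact hasFDerivAt_integral_of_forall_norm_fderiv_le
    (fun β => ((hmeas β).pow_const 2).aestronglyMeasurable) hint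
    (aestronglyMeasurable_gradDpopIntegrand hF hX β) hC (integrable_const C)
    (hasFDerivAt_sq_cdfOf_sub_dotConv_one hF hX)

theorem hasFDerivAt_gradDpop (hF : IsBoundedC2 F M) (hX : MemLp id 2 μX) (β : Fin d → ℝ) :
    HasFDerivAt (gradDpop F μX μY) (hessDpop F μX μY β) β := by
  obtain ⟨C₁, hC₁⟩ := exists_norm_gradDpopIntegrand_le (μY := μY) hF hX
  obtain ⟨C₂, hC₂⟩ := exists_norm_hessDpopIntegrand_le (μY := μY) hF hX
  exact hasFDerivAt_integral_of_forall_norm_fderiv_le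
    (aestronglyMeasurable_gradDpopIntegrand hF hX)
    (.of_bound (aestronglyMeasurable_gradDpopIntegrand hF hX β) C₁ (ae_of_all _ (hC₁ β)))
    (aestronglyMeasurable_hessDpopIntegrand hF hX β) hC₂ (integrable_const C₂)
    (hasFDerivAt_gradDpopIntegrand hF hX)

theorem continuous_hessDpop (hF : IsBoundedC2 F M) (hX : MemLp id 2 μX) :
    Continuous (hessDpop F μX μY) := by
  obtain ⟨C, hC⟩ := exists_norm_hessDpopIntegrand_le (μY := μY) hF hX
  refine continuous_of_dominated (aestronglyMeasurable_hessDpopIntegrand hF hX)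
    (fun β => ae_of_all _ (hC β)) (integrable_const C) (ae_of_all _ fun y => ?_)
  have h₀ := (continuous_dotConv_one (μX := μX) hF).uncurry_right y
  have h₁ := (continuous_dotConv_dotCLM hF hX).uncurry_right y
  have h₂ := (continuous_dotConv_smulRight_dotCLM hF hX).uncurry_right y
  exact ((h₁.const_smul (2 : ℝ)).smulRight h₁).sub
    (((continuous_const.sub h₀).const_mul 2).smul h₂)

theorem contDiff_two_Dpop (hF : IsBoundedC2 F M) (hX : MemLp id 2 μX) :
    ContDiff ℝ 2 (Dpop F μX μY) :=
  contDiff_two_of_hasFDerivAt (hasFDerivAt_Dpop hF hX) (hasFDerivAt_gradDpop hF hX)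
    (continuous_hessDpop hF hX)

lemma hessDpop_apply_apply {β₀ : Fin d → ℝ} (hF : IsBoundedC2 F M) (hX : MemLp id 2 μX)
    (h : ∀ y, cdfOf μY y = dotConv μX (fun _ => (1 : ℝ)) F β₀ y) (v w : Fin d → ℝ) :
    hessDpop F μX μY β₀ v w =
      2 * ∫ y, dotConv μX dotCLM (deriv F) β₀ y v * dotConv μX dotCLM (deriv F) β₀ y w ∂μY := by
  obtain ⟨C, hC⟩ := exists_norm_hessDpopIntegrand_le (μY := μY) hF hX
  have hint := Integrable.of_bound (f := hessDpopIntegrand F μX μY β₀)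
    (aestronglyMeasurable_hessDpopIntegrand hF hX β₀) C (ae_of_all _ (hC β₀))
  rw [hessDpop, ContinuousLinearMap.integral_apply hint,
    ContinuousLinearMap.integral_apply (hint.apply_continuousLinearMap v), ← integral_const_mul]
  simp [hessDpopIntegrand, h, mul_assoc]

end Criterion

lemma UnlinkedModel.cdfOf_eq_dotConv {d : ℕ} {μX : Measure (Fin d → ℝ)} {μeps : Measure ℝ}
    [IsFiniteMeasure μeps] {β₀ : Fin d → ℝ} {μY : Measure ℝ} (h : UnlinkedModel μX μeps β₀ μY)
    (y : ℝ) : cdfOf μY y = dotConv μX (fun _ => (1 : ℝ)) (cdfOf μeps) β₀ y := by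
  have hT : Measurable fun q : (Fin d → ℝ) × ℝ => β₀ ⬝ᵥ q.1 + q.2 :=
    (by fun_prop : Continuous _).measurable
  have hpre : ∀ x, Prod.mk x ⁻¹' ((fun q : (Fin d → ℝ) × ℝ => β₀ ⬝ᵥ q.1 + q.2) ⁻¹' Iic y) =
      Iic (y - β₀ ⬝ᵥ x) := fun x => by
    ext e
    simp [le_sub_iff_add_le']
  rw [cdfOf, h, Measure.map_apply hT measurableSet_Iic,
    Measure.prod_apply (hT measurableSet_Iic), ← integral_toReal
      (measurable_measure_prodMk_left (hT measurableSet_Iic)).aemeasurable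
      (ae_of_all _ fun _ => measure_lt_top _ _)]
  simp [dotConv, cdfOf, hpre]

theorem population_criterion_smoothness_general
    {d : ℕ} (μX : Measure (Fin d → ℝ)) (μeps μY : Measure ℝ)
    [IsProbabilityMeasure μX] [IsProbabilityMeasure μeps]
    (β₀ : Fin d → ℝ) (hmodel : UnlinkedModel μX μeps β₀ μY)
    (feps : ℝ → ℝ) (hfnonneg : ∀ t, 0 ≤ feps t)
    (hdensity : μeps = volume.withDensity fun t => ENNReal.ofReal (feps t))
    (hC1 : ContDiff ℝ 1 feps)
    (M : ℝ) (hfbound : ∀ t, feps t ≤ M)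
    (hf'bound : ∀ t, |deriv feps t| ≤ M)
    (hX2 : Integrable (fun x : Fin d → ℝ => ∑ i, x i ^ 2) μX) :
    ContDiff ℝ 2 (fun β : Fin d → ℝ => Dpop (cdfOf μeps) μX μY β) ∧
      fderiv ℝ (fun β : Fin d → ℝ => Dpop (cdfOf μeps) μX μY β) β₀ = 0 ∧
      ∀ v w : Fin d → ℝ,
        fderiv ℝ (fderiv ℝ fun β : Fin d → ℝ => Dpop (cdfOf μeps) μX μY β) β₀ v w
          = 2 * (v ⬝ᵥ (Matrix.of fun i j : Fin d =>
              ∫ y, (∫ x, x i * feps (y - β₀ ⬝ᵥ x) ∂μX) *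
                (∫ x, x j * feps (y - β₀ ⬝ᵥ x) ∂μX) ∂μY) *ᵥ w) := by
  have : IsFiniteMeasure μY := hmodel ▸ inferInstance
  have hF := isBoundedC2_cdfOf_of_density hdensity hfnonneg hC1 hfbound hf'bound
  have hX := memLp_two_of_integrable_sum_sq hX2
  have hβ₀ := hmodel.cdfOf_eq_dotConv
  have hgrad : fderiv ℝ (Dpop (cdfOf μeps) μX μY) = gradDpop (cdfOf μeps) μX μY :=
    funext fun β => (hasFDerivAt_Dpop hF hX β).fderiv
  refine ⟨contDiff_two_Dpop hF hX, by rw [hgrad, gradDpop_eq_zero hβ₀], fun v w => ?_⟩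
  rw [hgrad, (hasFDerivAt_gradDpop hF hX β₀).fderiv,
    ContinuousLinearMap.apply_apply_eq_dotProduct_mulVec]
  simp only [hessDpop_apply_apply hF hX hβ₀,
    deriv_cdfOf_of_density hdensity hC1.continuous hfnonneg, dotConv_dotCLM_apply_single hC1.continuous
      (fun t => (abs_of_nonneg (hfnonneg t)).trans_le (hfbound t)) (hX.integrable one_le_two)]
  simp only [Matrix.mulVec, dotProduct, Matrix.of_apply, Finset.mul_sum]
  exact Finset.sum_congr rfl fun i _ => Finset.sum_congr rfl fun j _ => by ring

/-- **Smoothness of the population criterion.**  If the noise density `f^ε`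
is `C¹` with `f^ε ≤ M` and `|(f^ε)'| ≤ M`, and `E‖X‖² < ∞`, then `ψ = D_{2,F^Y}` is twice
continuously differentiable on `ℝ^d`, its gradient vanishes at `β₀`, and its Hessian at
`β₀` is `2U`. -/
theorem population_criterion_smoothness
    {d : ℕ} (μX : Measure (Fin d → ℝ)) (μeps μY : Measure ℝ)
    [IsProbabilityMeasure μX] [IsProbabilityMeasure μeps]
    (β₀ : Fin d → ℝ) (hmodel : UnlinkedModel μX μeps β₀ μY)
    (feps : ℝ → ℝ) (hfnonneg : ∀ t, 0 ≤ feps t)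
    (hdensity : μeps = volume.withDensity fun t => ENNReal.ofReal (feps t))
    (hC1 : ContDiff ℝ 1 feps)
    (M : ℝ) (hM : 0 < M) (hfbound : ∀ t, feps t ≤ M)
    (hf'bound : ∀ t, |deriv feps t| ≤ M)
    (hX2 : Integrable (fun x : Fin d → ℝ => ∑ i, x i ^ 2) μX) :
    ContDiff ℝ 2 (fun β : Fin d → ℝ => Dpop (cdfOf μeps) μX μY β) ∧
      fderiv ℝ (fun β : Fin d → ℝ => Dpop (cdfOf μeps) μX μY β) β₀ = 0 ∧
      ∀ v w : Fin d → ℝ,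
        fderiv ℝ (fderiv ℝ fun β : Fin d → ℝ => Dpop (cdfOf μeps) μX μY β) β₀ v w
          = 2 * (v ⬝ᵥ (Matrix.of fun i j : Fin d =>
              ∫ y, (∫ x, x i * feps (y - β₀ ⬝ᵥ x) ∂μX) *
                (∫ x, x j * feps (y - β₀ ⬝ᵥ x) ∂μX) ∂μY) *ᵥ w) :=
  population_criterion_smoothness_general μX μeps μY β₀ hmodel feps hfnonneg hdensity hC1 M hfbound
    hf'bound hX2
end
end
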